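/- Let g be the 6-dimensional real Lie algebra s_{3,3}^0 × R^3 with nonzero brackets [e2,e3] = -e1, [e1,e3] = e2 (coming from structure equations de^1 = e^{23}, de^2 = -e^{13}). Then the endomorphism J defined by J e1 = e2, J e2 = -e1, J e3 = e4, J e4 = -e3, J e5 = e6, J e6 = -e5 satisfies J^2 = -Id and has vanishing Nijenhuis tensor, and moreover the Koszul 1-form ψ(x) = Tr(J ∘ ad x) - Tr(ad(Jx)) equals 2 e^3 (i.e., ψ(e3) = 2 and ψ(e_i) = 0 for i ≠ 3); in particular ψ vanishes on [g,g]. -/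
import Mathlib


namespace Stmt2

abbrev V : Type := Fin 6 → ℝ

/-- standard basis -/
noncomputable def e (i : Fin 6) : V := Pi.single i 1

/-- the Lie bracket -/
def br (x y : V) : V := fun k =>
  match k with
  | 0 => -(x 1 * y 2 - x 2 * y 1)
  | 1 => x 0 * y 2 - x 2 * y 0
  | 2 => 0
  | 3 => 0
  | 4 => 0
  | 5 => 0

/-- the adjoint operator `ad x = [x, ·]` as a linear endomorphism -/
noncomputable def ad (x : V) : V →ₗ[ℝ] V where
  toFun := br x
  map_add' := by intro a b; funext k; fin_cases k <;> simp [br] <;> ring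
  map_smul' := by intro c a; funext k; fin_cases k <;> simp [br] <;> ring

/-- the Nijenhuis tensor of an endomorphism `J` -/
noncomputable def nijenhuis (J : V →ₗ[ℝ] V) (x y : V) : V :=
  br x y + J (br (J x) y + br x (J y)) - br (J x) (J y)

/-- the Koszul 1-form `ψ(x) = Tr(J ∘ ad x) - Tr(ad (J x))` -/
noncomputable def psi (J : V →ₗ[ℝ] V) (x : V) : ℝ :=
  LinearMap.trace ℝ V (J ∘ₗ ad x) - LinearMap.trace ℝ V (ad (J x))

def Jfun (x : V) : V := fun k =>
  match k with
  | 0 => -x 1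
  | 1 => x 0
  | 2 => -x 3
  | 3 => x 2
  | 4 => -x 5
  | 5 => x 4

noncomputable def Jmap : V →ₗ[ℝ] V where
  toFun := Jfun
  map_add' := by intro a b; funext k; fin_cases k <;> simp [Jfun] <;> ring
  map_smul' := by intro c a; funext k; fin_cases k <;> simp [Jfun] <;> ring

lemma trace_eq (f : V →ₗ[ℝ] V) :
    LinearMap.trace ℝ V f = ∑ i : Fin 6, f (e i) i := by
  rw [LinearMap.trace_eq_matrix_trace ℝ (Pi.basisFun ℝ (Fin 6)) f]
  simp [Matrix.trace, LinearMap.toMatrix, LinearMap.toMatrix', Matrix.diag, e,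
    Pi.basisFun_repr]

lemma psi_eq (x : V) : psi Jmap x = 2 * x 2 := by
  unfold psi
  rw [trace_eq, trace_eq]
  simp only [Fin.sum_univ_six]
  simp [ad, Jmap, Jfun, br, e, Pi.single]
  ring

/-- on `s_{3,3}^0 × ℝ³` the given `J` is an integrable complex structure with
Koszul form `ψ = 2 e^3`; in particular `ψ` vanishes on `[g,g]`. -/
theorem stmt_2 :
    ∃ J : V →ₗ[ℝ] V,
      J (e 0) = e 1 ∧ J (e 1) = -e 0 ∧ J (e 2) = e 3 ∧ J (e 3) = -e 2 ∧
      J (e 4) = e 5 ∧ J (e 5) = -e 4 ∧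
      (∀ x : V, J (J x) = -x) ∧
      (∀ x y : V, nijenhuis J x y = 0) ∧
      psi J (e 2) = 2 ∧
      psi J (e 0) = 0 ∧ psi J (e 1) = 0 ∧ psi J (e 3) = 0 ∧
      psi J (e 4) = 0 ∧ psi J (e 5) = 0 ∧
      (∀ x y : V, psi J (br x y) = 0) := by
  refine ⟨Jmap, ?_, ?_, ?_, ?_, ?_, ?_, ?_, ?_, ?_, ?_, ?_, ?_, ?_, ?_, ?_⟩
  · funext k; fin_cases k <;> simp [Jmap, Jfun, e, Pi.single]
  · funext k; fin_cases k <;> simp [Jmap, Jfun, e, Pi.single]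
  · funext k; fin_cases k <;> simp [Jmap, Jfun, e, Pi.single]
  · funext k; fin_cases k <;> simp [Jmap, Jfun, e, Pi.single]
  · funext k; fin_cases k <;> simp [Jmap, Jfun, e, Pi.single]
  · funext k; fin_cases k <;> simp [Jmap, Jfun, e, Pi.single]
  · intro x; funext k; fin_cases k <;> simp [Jmap, Jfun]
  · intro x y; funext k; unfold nijenhuis
    fin_cases k <;> simp [Jmap, Jfun, br] <;> ring
  · rw [psi_eq]; simp [e, Pi.single]
  · rw [psi_eq]; simp [e, Pi.single]
  · rw [psi_eq]; simp [e, Pi.single]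
  · rw [psi_eq]; simp [e, Pi.single]
  · rw [psi_eq]; simp [e, Pi.single]
  · rw [psi_eq]; simp [e, Pi.single]
  · intro x y; rw [psi_eq]; simp [br]

end Stmt2
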